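/- arXiv:1604.01106 — 7 statements merged into one kernel-verified Lean document; each statement's English description precedes it below -/
import Mathlib

section
/- The sequence u_n = ∑_{k=0}^{n} C(n,k)^2 · C(n+k,n) · C(2k,n) satisfies, for all n ≥ 1, the recurrence (n+1)^3 · u_{n+1} = (2n+1)(13n^2+13n+4) · u_n + 3n(3n−1)(3n+1) · u_{n−1}, with u_0 = 1 and u_1 = 4. -/
/-!
Zeilberger's creative telescoping: the summand `F = aperyLikeTerm` has a certificate
`G = aperyLikeCertificate` with
`(m+2)³ F (m+2) k - (2m+3)(13m²+39m+30) F (m+1) k - 3(m+1)(3m+2)(3m+4) F m k = G m (k+1) - G m k`;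
summing over `k` telescopes to `G m (m+3) - G m 0 = 0`.

To verify the certificate without boundary cases, every binomial coefficient is written with
factorials and the reciprocal factorial `1/Γ(a+1)` on `ℤ`, which vanishes at negative integers
and satisfies `1/a! = (a+1)/(a+1)!` everywhere. All five terms then become polynomial multiples of
one common term, and the identity reduces to a polynomial identity.
-/

open Nat Finset

def invFactorial : ℤ → ℚ
  | .ofNat n => (n ! : ℚ)⁻¹
  | .negSucc _ => 0

theorem invFactorial_natCast (n : ℕ) : invFactorial n = (n ! : ℚ)⁻¹ := rfl

theorem invFactorial_of_neg {a : ℤ} (ha : a < 0) : invFactorial a = 0 := by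
  obtain ⟨n, rfl⟩ := Int.exists_eq_neg_ofNat ha.le
  rcases n with _ | n
  · simp at ha
  · rfl

theorem invFactorial_sub_one (a : ℤ) : invFactorial (a - 1) = a * invFactorial a := by
  rcases lt_or_ge a 1 with ha | ha
  · rw [invFactorial_of_neg (by omega)]
    obtain rfl | ha : a = 0 ∨ a < 0 := by omega
    · simp
    · simp [invFactorial_of_neg ha]
  · obtain ⟨n, rfl⟩ : ∃ n : ℕ, a = n + 1 := ⟨(a - 1).toNat, by omega⟩
    rw [add_sub_cancel_right, ← Nat.cast_succ, invFactorial_natCast, invFactorial_natCast,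
      Nat.factorial_succ]
    push_cast
    field_simp

theorem invFactorial_eq_mul_of_add_one_eq {a b : ℤ} (h : a + 1 = b) :
    invFactorial a = b * invFactorial b := by
  rw [← invFactorial_sub_one, ← h, add_sub_cancel_right]

theorem invFactorial_eq_mul_of_add_two_eq {a b : ℤ} (h : a + 2 = b) :
    invFactorial a = (b - 1) * b * invFactorial b := by
  rw [invFactorial_eq_mul_of_add_one_eq (b := b - 1) (by omega),
    invFactorial_eq_mul_of_add_one_eq (sub_add_cancel b 1)]
  push_cast
  ring

theorem natCast_choose_eq (n k : ℕ) :
    (n.choose k : ℚ) = n ! * invFactorial k * invFactorial (n - k) := by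
  rcases le_or_gt k n with hk | hk
  · rw [Nat.cast_choose ℚ hk, ← Nat.cast_sub hk, invFactorial_natCast, invFactorial_natCast]
    field_simp
  · rw [Nat.choose_eq_zero_of_lt hk, invFactorial_of_neg (a := n - k) (by omega)]
    simp

def aperyLikeTerm (n k : ℕ) : ℕ := n.choose k ^ 2 * (n + k).choose n * (2 * k).choose n

def aperyLike (n : ℕ) : ℕ := ∑ k ∈ range (n + 1), aperyLikeTerm n k

theorem aperyLikeTerm_eq (n k : ℕ) :
    (aperyLikeTerm n k : ℚ) = (n + k) ! * (2 * k) ! *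
      invFactorial k ^ 3 * invFactorial (n - k) ^ 2 * invFactorial (2 * k - n) := by
  simp only [aperyLikeTerm, Nat.cast_mul, Nat.cast_pow, natCast_choose_eq]
  push_cast
  rw [show (n : ℤ) + k - n = k by ring, invFactorial_natCast n]
  field_simp

def aperyLikeBase (m k : ℕ) : ℚ :=
  (m + k) ! * (2 * k) ! * invFactorial (k + 1) ^ 3 * invFactorial (m + 2 - k) ^ 2 *
    invFactorial (2 * k - m)

theorem aperyLikeTerm_eq_mul_base (m k : ℕ) :
    (aperyLikeTerm m k : ℚ) =
      (k + 1) ^ 3 * ((m - k + 1) * (m - k + 2)) ^ 2 * aperyLikeBase m k := by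
  rw [aperyLikeTerm_eq, aperyLikeBase, invFactorial_eq_mul_of_add_one_eq (a := k) rfl,
    invFactorial_eq_mul_of_add_two_eq (a := m - k) (b := m + 2 - k) (by ring)]
  push_cast
  ring

theorem aperyLikeTerm_succ_eq_mul_base (m k : ℕ) :
    (aperyLikeTerm (m + 1) k : ℚ) =
      (m + k + 1) * (k + 1) ^ 3 * (m + 2 - k) ^ 2 * (2 * k - m) * aperyLikeBase m k := by
  rw [aperyLikeTerm_eq, aperyLikeBase, show m + 1 + k = m + k + 1 by ring, Nat.factorial_succ,
    invFactorial_eq_mul_of_add_one_eq (a := k) rfl,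
    invFactorial_eq_mul_of_add_one_eq (a := (m + 1 : ℕ) - k) (b := m + 2 - k)
      (by push_cast; ring),
    invFactorial_eq_mul_of_add_one_eq (a := 2 * k - (m + 1 : ℕ)) (b := 2 * k - m)
      (by push_cast; ring)]
  push_cast
  ring

theorem aperyLikeTerm_add_two_eq_mul_base (m k : ℕ) :
    (aperyLikeTerm (m + 2) k : ℚ) =
      (m + k + 2) * (m + k + 1) * (k + 1) ^ 3 * (2 * k - m - 1) * (2 * k - m) *
        aperyLikeBase m k := by
  rw [aperyLikeTerm_eq, aperyLikeBase, show m + 2 + k = m + k + 1 + 1 by ring, Nat.factorial_succ,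
    Nat.factorial_succ, invFactorial_eq_mul_of_add_one_eq (a := k) rfl,
    invFactorial_eq_mul_of_add_two_eq (a := 2 * k - (m + 2 : ℕ)) (b := 2 * k - m)
      (by push_cast; ring)]
  push_cast
  ring

-- Found by Zeilberger's algorithm.
def aperyLikeCertificatePoly (m k : ℚ) : ℚ :=
  (m + 2) ^ 2 * (7 * m + 11) - 13 * (2 * m + 3) * (m + 2) * k + (15 * m + 22) * k ^ 2

def aperyLikeCertificate (m k : ℕ) : ℚ :=
  aperyLikeCertificatePoly m k * (m + k) ! * (2 * k) ! * invFactorial (k - 1) ^ 2 *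
    invFactorial k * invFactorial (m + 2 - k) ^ 2 * invFactorial (2 * k - m - 2)

theorem aperyLikeCertificate_eq_mul_base (m k : ℕ) :
    aperyLikeCertificate m k = aperyLikeCertificatePoly m k *
      (k * (k + 1)) ^ 2 * (k + 1) * (2 * k - m - 1) * (2 * k - m) * aperyLikeBase m k := by
  rw [aperyLikeCertificate, aperyLikeBase,
    invFactorial_eq_mul_of_add_two_eq (a := k - 1) (b := k + 1) (by ring),
    invFactorial_eq_mul_of_add_one_eq (a := k) rfl,
    invFactorial_eq_mul_of_add_two_eq (a := 2 * k - m - 2) (b := 2 * k - m) (by ring)]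
  push_cast
  ring

theorem aperyLikeCertificate_succ_eq_mul_base (m k : ℕ) :
    aperyLikeCertificate m (k + 1) = aperyLikeCertificatePoly m (k + 1) *
      (m + k + 1) * (2 * k + 1) * (2 * k + 2) * (k + 1) ^ 2 * (m + 2 - k) ^ 2 *
        aperyLikeBase m k := by
  rw [aperyLikeCertificate, aperyLikeBase, show m + (k + 1) = m + k + 1 by ring,
    show 2 * (k + 1) = 2 * k + 1 + 1 by ring, Nat.factorial_succ (m + k),
    Nat.factorial_succ (2 * k + 1), Nat.factorial_succ (2 * k),
    invFactorial_eq_mul_of_add_one_eq (a := (k + 1 : ℕ) - 1) (b := k + 1) (by push_cast; ring),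
    invFactorial_eq_mul_of_add_one_eq (a := m + 2 - (k + 1 : ℕ)) (b := m + 2 - k)
      (by push_cast; ring),
    show 2 * ((k + 1 : ℕ) : ℤ) - m - 2 = 2 * k - m by push_cast; ring]
  push_cast
  ring

theorem aperyLikeTerm_telescoping (m k : ℕ) :
    ((m : ℚ) + 2) ^ 3 * aperyLikeTerm (m + 2) k
      - (2 * (m : ℚ) + 3) * (13 * (m : ℚ) ^ 2 + 39 * m + 30) * aperyLikeTerm (m + 1) k
      - 3 * ((m : ℚ) + 1) * (3 * m + 2) * (3 * m + 4) * aperyLikeTerm m k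
      = aperyLikeCertificate m (k + 1) - aperyLikeCertificate m k := by
  rw [aperyLikeTerm_add_two_eq_mul_base, aperyLikeTerm_succ_eq_mul_base, aperyLikeTerm_eq_mul_base,
    aperyLikeCertificate_succ_eq_mul_base, aperyLikeCertificate_eq_mul_base]
  simp only [aperyLikeCertificatePoly]
  ring

theorem aperyLikeCertificate_zero (m : ℕ) : aperyLikeCertificate m 0 = 0 := by
  rw [aperyLikeCertificate, invFactorial_of_neg (a := (0 : ℕ) - 1) (by simp)]
  simp

theorem aperyLikeCertificate_add_three (m : ℕ) : aperyLikeCertificate m (m + 3) = 0 := by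
  rw [aperyLikeCertificate, invFactorial_of_neg (a := m + 2 - (m + 3 : ℕ)) (by omega)]
  simp

theorem aperyLikeTerm_eq_zero_of_lt {n k : ℕ} (h : n < k) : aperyLikeTerm n k = 0 := by
  simp [aperyLikeTerm, Nat.choose_eq_zero_of_lt h]

theorem sum_range_aperyLikeTerm_of_le {n N : ℕ} (h : n + 1 ≤ N) :
    ∑ k ∈ range N, aperyLikeTerm n k = aperyLike n :=
  eventually_constant_sum (fun _ hk ↦ aperyLikeTerm_eq_zero_of_lt hk) h

theorem aperyLike_recurrence (m : ℕ) :
    ((m : ℤ) + 2) ^ 3 * aperyLike (m + 2) =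
      (2 * (m : ℤ) + 3) * (13 * (m : ℤ) ^ 2 + 39 * m + 30) * aperyLike (m + 1)
        + 3 * ((m : ℤ) + 1) * (3 * m + 2) * (3 * m + 4) * aperyLike m := by
  have hsum := sum_range_sub (aperyLikeCertificate m) (m + 3)
  rw [aperyLikeCertificate_add_three, aperyLikeCertificate_zero, sub_zero,
    ← sum_congr rfl fun k _ ↦ aperyLikeTerm_telescoping m k] at hsum
  simp only [sum_sub_distrib, ← mul_sum, ← Nat.cast_sum,
    sum_range_aperyLikeTerm_of_le (show m + 2 + 1 ≤ m + 3 by omega),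
    sum_range_aperyLikeTerm_of_le (show m + 1 + 1 ≤ m + 3 by omega),
    sum_range_aperyLikeTerm_of_le (show m + 1 ≤ m + 3 by omega)] at hsum
  qify
  linear_combination hsum

theorem apery_like_recurrence (u : ℕ → ℤ)
    (hu : ∀ n : ℕ, u n = ∑ k ∈ Finset.range (n + 1),
      (n.choose k : ℤ) ^ 2 * ((n + k).choose n) * ((2 * k).choose n)) :
    u 0 = 1 ∧ u 1 = 4 ∧ ∀ n : ℕ, 1 ≤ n →
      ((n : ℤ) + 1) ^ 3 * u (n + 1) =
        (2 * (n : ℤ) + 1) * (13 * (n : ℤ) ^ 2 + 13 * n + 4) * u n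
          + 3 * (n : ℤ) * (3 * n - 1) * (3 * n + 1) * u (n - 1) := by
  have hu' (n : ℕ) : u n = aperyLike n := by
    simp [hu n, aperyLike, aperyLikeTerm]
  refine ⟨by rw [hu']; rfl, by rw [hu']; rfl, fun n hn ↦ ?_⟩
  obtain ⟨m, rfl⟩ := Nat.exists_eq_add_of_le' hn
  rw [hu', hu', hu', Nat.add_sub_cancel]
  push_cast
  linear_combination aperyLike_recurrence m
end

section
/- Define the sequence (c_n)_{n≥0} by c_0 = 1 and, for n ≥ 1, c_n = ∑_{k=0}^{⌊n/2⌋} C(n+k+1, 3k+1) · 1^{n−2k} · c_k − ∑_{k=0}^{n−1} C(n+2k+1, 3k+1) · (−1)^{n−k} · c_k (i.e., the self-replication recursion with λ = −1, μ = 1). Then c_n = 2^n · C(2n, n) for all n ≥ 0. -/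
/-!
Let `F = ∑ 2ⁿ C(2n, n) Xⁿ`. Read coefficientwise, the recursion says that `∑ cₙ Xⁿ` satisfies
`(1 + X)⁻² F(X / (1 + X)³) = (1 - X)⁻² F(X² / (1 - X)³)`: the coefficient of `Xⁿ` on the left
contains `cₙ` with coefficient `1` and otherwise only `cₖ` with `k < n`. So it suffices to show that
`F` itself satisfies this functional equation. From `(1 - 8X) F' = 4F` one gets `(1 - 8X) F² = 1`;
after substitution both sides square to the inverse of the same quartic
`(1 - X)⁴ - 8X²(1 - X) = (1 + X)⁴ - 8X(1 + X)`, and both have constant term `1`.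
-/

open PowerSeries Finset

namespace SelfReplication

section CommRing

variable {R : Type*} [CommRing R]

theorem coeff_mul_subst {z : R⟦X⟧} (hz : constantCoeff z = 0) (g f : R⟦X⟧) (n : ℕ) :
    coeff n (g * f.subst z) = ∑ k ∈ range (n + 1), coeff k f * coeff n (g * z ^ k) := by
  have hsub := HasSubst.of_constantCoeff_zero' hz
  obtain ⟨y, hy⟩ : X ^ (n + 1) ∣ z ^ (n + 1) := pow_dvd_pow_of_dvd (X_dvd_iff.2 hz) _
  conv_lhs => rw [eq_X_pow_mul_shift_add_trunc (n + 1) f]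
  rw [subst_add hsub, subst_mul hsub, subst_pow hsub, subst_X hsub, subst_coe hsub,
    Polynomial.aeval_def, eval₂_trunc_eq_sum_range, hy, mul_add, map_add, mul_left_comm,
    mul_assoc, coeff_X_pow_mul', if_neg (by omega), zero_add, mul_sum, map_sum]
  refine sum_congr rfl fun k _ => ?_
  rw [mul_left_comm, ← coeff_C_mul]
  rfl

theorem eq_of_sq_eq_of_constantCoeff_eq_one [IsDomain R] [CharZero R] {a b : R⟦X⟧}
    (h : a ^ 2 = b ^ 2) (ha : constantCoeff a = 1) (hb : constantCoeff b = 1) : a = b := by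
  refine (sq_eq_sq_iff_eq_or_eq_neg.1 h).resolve_right fun hab => ?_
  have := congrArg constantCoeff hab
  rw [map_neg, ha, hb] at this
  norm_num at this

theorem one_add_X_mul_rescale_neg_one_mk_one : (1 + X) * rescale (-1) (mk 1 : R⟦X⟧) = 1 := by
  simpa [rescale_X, mul_comm] using congrArg (rescale (-1 : R)) (mk_one_mul_one_sub_eq_one R)

/-- With `g = (1 - X)⁻¹` resp. `g = (1 + X)⁻¹` this is `(1 ∓ X)⁻² f(t / (1 ∓ X)³)`. -/
noncomputable def weightedSubst (f t g : R⟦X⟧) : R⟦X⟧ := g ^ 2 * f.subst (t * g ^ 3)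

theorem coeff_weightedSubst {t g : R⟦X⟧} (ht : constantCoeff t = 0) (f : R⟦X⟧) (n : ℕ) :
    coeff n (weightedSubst f t g) =
      ∑ k ∈ range (n + 1), coeff k f * coeff n (t ^ k * g ^ (3 * k + 2)) := by
  rw [weightedSubst, coeff_mul_subst (by simp [ht])]
  refine sum_congr rfl fun k _ => ?_
  ring_nf

theorem constantCoeff_weightedSubst {t : R⟦X⟧} (ht : constantCoeff t = 0) (f g : R⟦X⟧) :
    constantCoeff (weightedSubst f t g) = constantCoeff f * constantCoeff g ^ 2 := by
  simpa using coeff_weightedSubst (g := g) ht f 0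

end CommRing

def centralSeries : ℤ⟦X⟧ := mk fun n => 2 ^ n * ((2 * n).choose n : ℤ)

theorem coeff_succ_centralSeries_mul (n : ℕ) :
    coeff (n + 1) centralSeries * (n + 1) = 4 * (2 * n + 1) * coeff n centralSeries := by
  have h : ((n : ℤ) + 1) * (2 * (n + 1)).choose (n + 1) = 2 * (2 * n + 1) * (2 * n).choose n := by
    have := Nat.succ_mul_centralBinom_succ n
    rw [Nat.centralBinom_eq_two_mul_choose, Nat.centralBinom_eq_two_mul_choose] at this
    exact_mod_cast this
  simp only [centralSeries, coeff_mk]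
  linear_combination (2 : ℤ) ^ (n + 1) * h

theorem one_sub_mul_derivative_centralSeries :
    (1 - 8 * X) * d⁄dX ℤ centralSeries = 4 * centralSeries := by
  have h8 : (8 : ℤ⟦X⟧) = C 8 := (map_ofNat C 8).symm
  have h4 : (4 : ℤ⟦X⟧) = C 4 := (map_ofNat C 4).symm
  ext n
  rw [h8, h4, sub_mul, one_mul, map_sub, mul_assoc, coeff_C_mul, coeff_C_mul, coeff_derivative]
  rcases n with _ | n
  · simp [centralSeries]
  · have h := coeff_succ_centralSeries_mul (n + 1)
    rw [coeff_succ_X_mul, coeff_derivative]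
    push_cast at h ⊢
    linear_combination h

theorem one_sub_mul_centralSeries_sq : (1 - 8 * X) * centralSeries ^ 2 = 1 := by
  refine derivative.ext ?_ (by simp [centralSeries])
  have hD8 : d⁄dX ℤ (8 : ℤ⟦X⟧) = 0 := by rw [← map_ofNat C 8, derivative_C]
  simp only [Derivation.leibniz, derivative_pow, map_sub, Derivation.map_one_eq_zero, hD8,
    derivative_X, smul_eq_mul]
  linear_combination (2 * centralSeries) * one_sub_mul_derivative_centralSeries

theorem one_sub_mul_subst_centralSeries_sq {z : ℤ⟦X⟧} (hz : constantCoeff z = 0) :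
    (1 - 8 * z) * centralSeries.subst z ^ 2 = 1 := by
  have hsub := HasSubst.of_constantCoeff_zero' hz
  simpa [← coe_substAlgHom hsub, substAlgHom_X hsub, map_ofNat] using
    congrArg (substAlgHom (R := ℤ) hsub) one_sub_mul_centralSeries_sq

theorem mul_weightedSubst_centralSeries_sq {s g t : ℤ⟦X⟧} (hsg : s * g = 1)
    (ht : constantCoeff t = 0) :
    (s ^ 4 - 8 * t * s) * weightedSubst centralSeries t g ^ 2 = 1 := by
  have hF := one_sub_mul_subst_centralSeries_sq (z := t * g ^ 3) (by simp [ht])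
  set S := centralSeries.subst (t * g ^ 3)
  rw [weightedSubst]
  linear_combination hF + ((s * g) ^ 3 + (s * g) ^ 2 + s * g + 1 - 8 * t * g ^ 3) * S ^ 2 * hsg

theorem weightedSubst_centralSeries_X_eq_X_sq :
    weightedSubst centralSeries X (rescale (-1) (mk 1)) =
      weightedSubst centralSeries (X ^ 2) (mk 1) := by
  have hL := mul_weightedSubst_centralSeries_sq one_add_X_mul_rescale_neg_one_mk_one constantCoeff_X
  have hR := mul_weightedSubst_centralSeries_sq (s := 1 - X) (t := X ^ 2)
    (by rw [mul_comm, mk_one_mul_one_sub_eq_one]) (by simp)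
  refine eq_of_sq_eq_of_constantCoeff_eq_one ?_ ?_ ?_
  · linear_combination weightedSubst centralSeries (X ^ 2) (mk 1) ^ 2 * hL
      - weightedSubst centralSeries X (rescale (-1) (mk 1)) ^ 2 * hR
  all_goals simp [constantCoeff_weightedSubst, centralSeries, rescale_mk]

theorem coeff_X_sq_pow_mul_mk_one_pow (n k : ℕ) :
    coeff n ((X ^ 2) ^ k * (mk 1 : ℤ⟦X⟧) ^ (3 * k + 2)) =
      if 2 * k ≤ n then ((n + k + 1).choose (3 * k + 1) : ℤ) else 0 := by
  rw [← pow_mul, coeff_X_pow_mul', mk_one_pow_eq_mk_choose_add, coeff_mk]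
  split_ifs
  · congr 2
    omega
  · rfl

theorem coeff_X_pow_mul_rescale_mk_one_pow (n k : ℕ) :
    coeff n (X ^ k * rescale (-1) (mk 1 : ℤ⟦X⟧) ^ (3 * k + 2)) =
      if k ≤ n then ((n + 2 * k + 1).choose (3 * k + 1) : ℤ) * (-1) ^ (n - k) else 0 := by
  rw [← map_pow, coeff_X_pow_mul', coeff_rescale, mk_one_pow_eq_mk_choose_add, coeff_mk]
  split_ifs
  · rw [mul_comm]
    congr 3
    omega
  · rfl

theorem coeff_weightedSubst_centralSeries_X_sq (n : ℕ) :
    coeff n (weightedSubst centralSeries (X ^ 2) (mk 1)) =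
      ∑ k ∈ range (n / 2 + 1),
        ((n + k + 1).choose (3 * k + 1) : ℤ) * (2 ^ k * (2 * k).choose k) := by
  rw [coeff_weightedSubst (by simp),
    ← sum_subset (range_subset_range.2 (show n / 2 + 1 ≤ n + 1 by omega))]
  · refine sum_congr rfl fun k hk => ?_
    rw [coeff_X_sq_pow_mul_mk_one_pow, if_pos (by simp at hk; omega), centralSeries, coeff_mk,
      mul_comm]
  · intro k _ hk
    rw [coeff_X_sq_pow_mul_mk_one_pow, if_neg (by simp at hk; omega), mul_zero]

theorem coeff_weightedSubst_centralSeries_X (n : ℕ) :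
    coeff n (weightedSubst centralSeries X (rescale (-1) (mk 1))) =
      ∑ k ∈ range (n + 1),
        ((n + 2 * k + 1).choose (3 * k + 1) : ℤ) * (-1) ^ (n - k) * (2 ^ k * (2 * k).choose k) := by
  rw [coeff_weightedSubst constantCoeff_X]
  refine sum_congr rfl fun k hk => ?_
  rw [coeff_X_pow_mul_rescale_mk_one_pow, if_pos (by simp at hk; omega), centralSeries, coeff_mk,
    mul_comm]

end SelfReplication

theorem self_replication_lambda_neg_one (c : ℕ → ℤ) (h0 : c 0 = 1)
    (hrec : ∀ n : ℕ, 1 ≤ n → c n =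
      ∑ k ∈ Finset.range (n / 2 + 1),
        ((n + k + 1).choose (3 * k + 1) : ℤ) * (1 : ℤ) ^ (n - 2 * k) * c k
      - ∑ k ∈ Finset.range n,
        ((n + 2 * k + 1).choose (3 * k + 1) : ℤ) * (-1 : ℤ) ^ (n - k) * c k) :
    ∀ n : ℕ, c n = 2 ^ n * ((2 * n).choose n : ℤ) := by
  intro n
  induction n using Nat.strong_induction_on with
  | _ n ih =>
    rcases Nat.eq_zero_or_pos n with rfl | hn
    · simpa using h0
    have key := congrArg (coeff n) SelfReplication.weightedSubst_centralSeries_X_eq_X_sq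
    rw [SelfReplication.coeff_weightedSubst_centralSeries_X,
      SelfReplication.coeff_weightedSubst_centralSeries_X_sq, sum_range_succ, Nat.sub_self,
      show n + 2 * n + 1 = 3 * n + 1 by ring, Nat.choose_self] at key
    rw [hrec n hn,
      sum_congr (s₁ := range (n / 2 + 1)) rfl fun k hk => by
        rw [ih k (by simp at hk; omega), one_pow, mul_one],
      sum_congr (s₁ := range n) rfl fun k hk => by rw [ih k (by simpa using hk)]]
    linear_combination -key
end

section
/- The formal power series f(z) = ∑_{n≥0} 2^n · C(2n,n) · z^n satisfies, as an identity of formal power series in z, the functional equation (1+z)^{-2} · f(z/(1+z)^3) = (1−z)^{-2} · f(z^2/(1−z)^3). -/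
open PowerSeries

/-- Formal composition `f ∘ g` of power series, valid when `g` has zero constant term:
the `n`-th coefficient is `∑_{k=0}^{n} f_k · [z^n] g^k`. -/
noncomputable def psComp (f g : PowerSeries ℚ) : PowerSeries ℚ :=
  PowerSeries.mk fun n =>
    ∑ k ∈ Finset.range (n + 1), (PowerSeries.coeff k f) * PowerSeries.coeff n (g ^ k)

noncomputable def fSeries : PowerSeries ℚ :=
  PowerSeries.mk fun n => (2 : ℚ) ^ n * ((2 * n).choose n : ℚ)

/-!
`f = (1 - 8z)^{-1/2}`: from `(n + 1) C(2n+2, n+1) = 2 (2n + 1) C(2n, n)` one gets `(1 - 8z) f' = 4f`,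
hence `f² (1 - 8z) = 1`. Composition with a series `g` without constant term is a ring
homomorphism, so `(f ∘ g)² (1 - 8g) = 1`. Consequently the two sides `L`, `R` of the functional
equation satisfy `L² W = R² W = 1` with the same
`W = (1 + z)⁴ (1 - 8z/(1 + z)³) = (1 - z)⁴ (1 - 8z²/(1 - z)³) = 1 - 4z - 2z² + 4z³ + z⁴`,
so `L² = R²`, and `L = R` because both have constant term `1`.
-/

lemma PowerSeries.eq_of_sq_eq_of_constantCoeff_eq_one {R : Type*} [CommRing R] [IsDomain R]
    [NeZero (2 : R)] {f g : R⟦X⟧} (h : f ^ 2 = g ^ 2) (hf : constantCoeff f = 1)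
    (hg : constantCoeff g = 1) : f = g := by
  refine (sq_eq_sq_iff_eq_or_eq_neg.mp h).resolve_right fun hneg => NeZero.ne (2 : R) ?_
  have := congrArg constantCoeff hneg
  rw [map_neg, hf, hg] at this
  linear_combination this

lemma psComp_eq_subst {g : ℚ⟦X⟧} (hg : constantCoeff g = 0) (f : ℚ⟦X⟧) :
    psComp f g = f.subst g := by
  ext n
  rw [psComp, coeff_mk, coeff_subst' (HasSubst.of_constantCoeff_zero' hg)]
  refine (finsum_eq_sum_of_support_subset _ fun k hk => ?_).symm
  rw [Finset.coe_range, Set.mem_Iio, Nat.lt_succ_iff]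
  by_contra! h
  exact hk <| mul_eq_zero_of_right _ <| coeff_of_lt_order n <|
    (ENat.natCast_lt_natCast.mpr h).trans_le (le_order_pow_of_constantCoeff_eq_zero k hg)

lemma constantCoeff_psComp (f g : ℚ⟦X⟧) : constantCoeff (psComp f g) = constantCoeff f := by
  rw [← coeff_zero_eq_constantCoeff_apply, ← coeff_zero_eq_constantCoeff_apply, psComp, coeff_mk]
  simp

lemma coeff_fSeries (n : ℕ) : coeff n fSeries = 2 ^ n * n.centralBinom := by
  rw [fSeries, coeff_mk, Nat.centralBinom]

lemma constantCoeff_fSeries : constantCoeff fSeries = 1 := by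
  rw [← coeff_zero_eq_constantCoeff_apply, coeff_fSeries]
  simp

lemma succ_mul_coeff_fSeries_succ (n : ℕ) :
    (n + 1) * coeff (n + 1) fSeries = 4 * (2 * n + 1) * coeff n fSeries := by
  have h : ((n + 1 : ℕ) : ℚ) * (n + 1).centralBinom = 2 * (2 * n + 1) * n.centralBinom := by
    exact_mod_cast Nat.succ_mul_centralBinom_succ n
  rw [coeff_fSeries, coeff_fSeries]
  push_cast at h
  linear_combination 2 ^ (n + 1) * h

lemma one_sub_mul_derivative_fSeries :
    (1 - 8 * X) * d⁄dX ℚ fSeries = 4 * fSeries := by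
  ext n
  rw [← map_ofNat C 8, ← map_ofNat C 4, sub_mul, one_mul, mul_assoc, map_sub, coeff_C_mul,
    coeff_C_mul, coeff_derivative]
  rcases n with _ | n
  · rw [coeff_zero_X_mul]
    linear_combination succ_mul_coeff_fSeries_succ 0
  · have h := succ_mul_coeff_fSeries_succ (n + 1)
    rw [coeff_succ_X_mul, coeff_derivative]
    push_cast at h ⊢
    linear_combination h

lemma fSeries_sq_mul_one_sub : fSeries ^ 2 * (1 - 8 * X) = 1 := by
  refine derivative.ext ?_ ?_
  · have h8 : d⁄dX ℚ (1 - 8 * X : ℚ⟦X⟧) = -8 := by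
      rw [← map_ofNat C 8, map_sub, derivative_one, Derivation.leibniz, derivative_C,
        derivative_X, smul_eq_mul, smul_zero, mul_one, add_zero, zero_sub]
    rw [Derivation.leibniz, derivative_pow, h8, smul_eq_mul, smul_eq_mul, derivative_one]
    linear_combination (2 * fSeries) * one_sub_mul_derivative_fSeries
  · simp [constantCoeff_fSeries]

lemma psComp_fSeries_sq_mul {g : ℚ⟦X⟧} (hg : constantCoeff g = 0) :
    psComp fSeries g ^ 2 * (1 - 8 * g) = 1 := by
  have h := congrArg (substAlgHom (HasSubst.of_constantCoeff_zero' hg)) fSeries_sq_mul_one_sub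
  rw [psComp_eq_subst hg]
  simpa only [map_mul, map_pow, map_sub, map_one, map_ofNat, coe_substAlgHom,
    subst_X (HasSubst.of_constantCoeff_zero' hg)] using h

lemma inv_sq_mul_psComp_fSeries_sq_mul {p g : ℚ⟦X⟧} (hp : constantCoeff p ≠ 0)
    (hg : constantCoeff g = 0) :
    (p⁻¹ ^ 2 * psComp fSeries g) ^ 2 * (p ^ 4 * (1 - 8 * g)) = 1 := by
  have hinv : p * p⁻¹ = 1 := PowerSeries.mul_inv_cancel p hp
  linear_combination (p * p⁻¹) ^ 4 * psComp_fSeries_sq_mul hg +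
    ((p * p⁻¹) ^ 3 + (p * p⁻¹) ^ 2 + p * p⁻¹ + 1) * hinv

lemma one_add_X_pow_four_mul_eq_one_sub_X_pow_four_mul :
    (1 + X : ℚ⟦X⟧) ^ 4 * (1 - 8 * (X * (1 + X)⁻¹ ^ 3))
      = (1 - X) ^ 4 * (1 - 8 * (X ^ 2 * (1 - X)⁻¹ ^ 3)) := by
  have hu : (1 + X : ℚ⟦X⟧) * (1 + X)⁻¹ = 1 := PowerSeries.mul_inv_cancel _ (by simp)
  have hv : (1 - X : ℚ⟦X⟧) * (1 - X)⁻¹ = 1 := PowerSeries.mul_inv_cancel _ (by simp)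
  linear_combination
    (-8 * X * (1 + X) * (((1 + X) * (1 + X)⁻¹) ^ 2 + (1 + X) * (1 + X)⁻¹ + 1)) * hu +
    (8 * X ^ 2 * (1 - X) * (((1 - X) * (1 - X)⁻¹) ^ 2 + (1 - X) * (1 - X)⁻¹ + 1)) * hv

theorem functional_equation_central_binomial :
    ((1 + X : PowerSeries ℚ)⁻¹) ^ 2 * psComp fSeries (X * ((1 + X)⁻¹) ^ 3)
      = ((1 - X : PowerSeries ℚ)⁻¹) ^ 2 * psComp fSeries (X ^ 2 * ((1 - X)⁻¹) ^ 3) := by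
  have hL := inv_sq_mul_psComp_fSeries_sq_mul (p := 1 + X) (g := X * (1 + X)⁻¹ ^ 3)
    (by simp) (by simp)
  have hR := inv_sq_mul_psComp_fSeries_sq_mul (p := 1 - X) (g := X ^ 2 * (1 - X)⁻¹ ^ 3)
    (by simp) (by simp)
  rw [one_add_X_pow_four_mul_eq_one_sub_X_pow_four_mul] at hL
  refine eq_of_sq_eq_of_constantCoeff_eq_one
    (left_inv_eq_right_inv hL ((mul_comm _ _).trans hR)) ?_ ?_ <;>
    simp [constantCoeff_psComp, constantCoeff_fSeries]
end

section
/- For every prime p, every nonnegative integer m, and integers r ≥ 1, the central binomial coefficients satisfy C(2·m·p^r, m·p^r) ≡ C(2·m·p^{r−1}, m·p^{r−1}) (mod p^{3r}) when p ≥ 5. -/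
/-!
Since `(n p)! = p ^ n * n! * ∏ {j ≤ n p | p ∤ j}`, the congruence reduces to
`∏ (M + j) ≡ ∏ j (mod p ^ (3 r))`, both products over `T = {j ≤ M | p ∤ j}` with `M = m p ^ r`.
For `F(X) = ∏_{j ∈ T} (X + j)` the reflection `j ↦ M - j` of `T` gives `F(-M) = ∏ j`, and
`F(M) - F(-M) ≡ 2 M F'(0)` modulo `M ^ 3`. Pairing `j` with `M - j` once more,
`2 F'(0) = M ∑_j ∏_{k ≠ j, M - j} k`, and modulo `p ^ r` this last sum is `-∏ T * ∑_j j⁻²`,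
which vanishes because the squares of the units of `ZMod (p ^ r)` sum to zero when `p ≥ 5`.
-/

open Finset Polynomial

theorem Polynomial.pow_three_dvd_eval_sub_eval_neg {R : Type*} [CommRing R] (f : R[X]) (x : R) :
    x ^ 3 ∣ f.eval x - f.eval (-x) - 2 * f.coeff 1 * x := by
  have hlt : f.natDegree < f.natDegree + 2 := by omega
  rw [eval_eq_sum_range' hlt, eval_eq_sum_range' hlt, ← sum_sub_distrib, sum_range_succ',
    sum_range_succ']
  have hhigh : ∀ k, x ^ 3 ∣ f.coeff (k + 2) * x ^ (k + 2) - f.coeff (k + 2) * (-x) ^ (k + 2) := by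
    intro k
    rcases k.eq_zero_or_pos with rfl | hk
    · simp
    · rw [← mul_sub]
      refine Dvd.dvd.mul_left (dvd_sub (pow_dvd_pow x (by omega)) ?_) _
      rw [neg_pow]
      exact Dvd.dvd.mul_left (pow_dvd_pow x (by omega)) _
  convert dvd_sum fun k _ => hhigh k using 1
  ring

theorem Polynomial.coeff_one_prod_X_add_C {R ι : Type*} [CommRing R] [DecidableEq ι]
    (s : Finset ι) (a : ι → R) :
    (∏ i ∈ s, (X + C (a i))).coeff 1 = ∑ i ∈ s, ∏ j ∈ s.erase i, a j := by
  have h := coeff_derivative (∏ i ∈ s, (X + C (a i))) 0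
  rw [zero_add, Nat.cast_zero, zero_add, mul_one] at h
  simp [← h, coeff_zero_eq_eval_zero, derivative_prod_finset, eval_finsetSum, eval_prod]

theorem sum_units_sq_eq_zero {R : Type*} [CommRing R] [Fintype Rˣ] (h2 : IsUnit (2 : R))
    (h3 : IsUnit (3 : R)) : ∑ u : Rˣ, (u : R) ^ 2 = 0 := by
  have hscale : ∑ u : Rˣ, (u : R) ^ 2 = 4 * ∑ u : Rˣ, (u : R) ^ 2 := by
    conv_lhs => rw [← Equiv.sum_comp (Equiv.mulLeft h2.unit)]
    simp only [Equiv.coe_mulLeft, Units.val_mul, IsUnit.unit_spec, mul_pow, ← mul_sum]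
    norm_num
  exact h3.mul_right_eq_zero.mp (by linear_combination -hscale)

theorem Nat.Prime.coprime_pow_iff_not_dvd {p r j : ℕ} (hp : p.Prime) (hr : r ≠ 0) :
    j.Coprime (p ^ r) ↔ ¬ p ∣ j := by
  rw [Nat.coprime_pow_right_iff (Nat.pos_of_ne_zero hr), Nat.coprime_comm,
    hp.coprime_iff_not_dvd]

theorem prod_Ioc_zero_id_eq_factorial (n : ℕ) : ∏ j ∈ Ioc 0 n, j = n.factorial := by
  rw [← Ico_add_one_add_one_eq_Ioc, zero_add, prod_Ico_id_eq_factorial]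

namespace JacobsthalLjunggren

open Nat

def nonMultiples (p M : ℕ) : Finset ℕ := {j ∈ Ioc 0 M | ¬ p ∣ j}

variable {p M : ℕ}

theorem mem_nonMultiples {j : ℕ} : j ∈ nonMultiples p M ↔ (0 < j ∧ j ≤ M) ∧ ¬ p ∣ j := by
  simp [nonMultiples]

theorem lt_of_mem_nonMultiples (hM : p ∣ M) {j : ℕ} (hj : j ∈ nonMultiples p M) : j < M := by
  obtain ⟨⟨-, hle⟩, hndvd⟩ := mem_nonMultiples.mp hj
  exact lt_of_le_of_ne hle fun h => hndvd (h ▸ hM)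

@[to_additive]
theorem prod_nonMultiples_add {α : Type*} [CommMonoid α] (hM : p ∣ M) (c : ℕ) (f : ℕ → α) :
    ∏ j ∈ nonMultiples p (M + c), f j
      = (∏ j ∈ nonMultiples p M, f j) * ∏ j ∈ nonMultiples p c, f (M + j) := by
  have hsplit : nonMultiples p (M + c)
      = nonMultiples p M ∪ (nonMultiples p c).map (addLeftEmbedding M) := by
    ext j
    simp only [mem_union, mem_map, addLeftEmbedding_apply, mem_nonMultiples]
    constructor
    · rintro ⟨⟨h0, hle⟩, hj⟩
      by_cases hjM : j ≤ M
      · exact Or.inl ⟨⟨h0, hjM⟩, hj⟩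
      · refine Or.inr ⟨j - M, ⟨⟨by omega, by omega⟩, fun h => hj ?_⟩, by omega⟩
        simpa [Nat.add_sub_cancel' (le_of_not_ge hjM)] using dvd_add hM h
    · rintro (⟨⟨h0, hle⟩, hj⟩ | ⟨i, ⟨⟨h0, hle⟩, hi⟩, rfl⟩)
      · exact ⟨⟨h0, by omega⟩, hj⟩
      · exact ⟨⟨by omega, by omega⟩, fun h => hi ((Nat.dvd_add_right hM).mp h)⟩
  have hdisj : Disjoint (nonMultiples p M) ((nonMultiples p c).map (addLeftEmbedding M)) := by
    simp only [disjoint_left, mem_map, addLeftEmbedding_apply, mem_nonMultiples]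
    rintro j ⟨⟨-, hle⟩, -⟩ ⟨i, ⟨⟨h0, -⟩, -⟩, rfl⟩
    omega
  rw [hsplit, prod_union hdisj, prod_map]
  rfl

theorem filter_dvd_Ioc_zero_mul (hp : 0 < p) (n : ℕ) :
    {j ∈ Ioc 0 (n * p) | p ∣ j} = (Ioc 0 n).image (p * ·) := by
  ext j
  simp only [mem_filter, mem_Ioc, mem_image]
  constructor
  · rintro ⟨⟨h0, hle⟩, i, rfl⟩
    exact ⟨i, ⟨Nat.pos_of_mul_pos_left h0, le_of_mul_le_mul_left (by linarith) hp⟩, rfl⟩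
  · rintro ⟨i, ⟨h0, hle⟩, rfl⟩
    exact ⟨⟨Nat.mul_pos hp h0, by nlinarith⟩, dvd_mul_right p i⟩

theorem factorial_mul_eq (hp : 0 < p) (n : ℕ) :
    (n * p)! = p ^ n * n ! * ∏ j ∈ nonMultiples p (n * p), j := by
  rw [← prod_Ioc_zero_id_eq_factorial, ← prod_filter_mul_prod_filter_not _ (p ∣ ·),
    filter_dvd_Ioc_zero_mul hp, prod_image fun _ _ _ _ => Nat.eq_of_mul_eq_mul_left hp,
    prod_mul_distrib, prod_const, card_Ioc, prod_Ioc_zero_id_eq_factorial]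
  rfl

theorem choose_mul_prod_sq (hp : 0 < p) (n : ℕ) :
    (2 * (n * p)).choose (n * p) * (∏ j ∈ nonMultiples p (n * p), j) ^ 2
      = (2 * n).choose n * ∏ j ∈ nonMultiples p (2 * (n * p)), j := by
  have hbig := choose_mul_factorial_mul_factorial (le_add_right (n * p) (n * p))
  have hsmall := choose_mul_factorial_mul_factorial (le_add_right n n)
  rw [Nat.add_sub_cancel, ← two_mul] at hbig hsmall
  rw [← mul_assoc, factorial_mul_eq hp, factorial_mul_eq hp, ← hsmall] at hbig
  rw [← mul_assoc]
  apply Nat.eq_of_mul_eq_mul_right (show 0 < p ^ (2 * n) * n ! ^ 2 by positivity)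
  linear_combination hbig

theorem sub_mem_nonMultiples (hM : p ∣ M) {j : ℕ} (hj : j ∈ nonMultiples p M) :
    M - j ∈ nonMultiples p M := by
  have hlt := lt_of_mem_nonMultiples hM hj
  refine mem_nonMultiples.mpr ⟨⟨by omega, by omega⟩, fun h => ?_⟩
  have := Nat.dvd_sub hM h
  rw [Nat.sub_sub_self hlt.le] at this
  exact (mem_nonMultiples.mp hj).2 this

theorem sub_ne_self_of_mem_nonMultiples (hp : p.Prime) (hp2 : p ≠ 2) (hM : p ∣ M) {j : ℕ}
    (hj : j ∈ nonMultiples p M) : M - j ≠ j := by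
  intro h
  have h2j : p ∣ 2 * j := by
    have := lt_of_mem_nonMultiples hM hj
    rwa [show 2 * j = M by omega]
  rcases hp.dvd_mul.mp h2j with h2 | hjd
  · exact hp2 ((prime_dvd_prime_iff_eq hp prime_two).mp h2)
  · exact (mem_nonMultiples.mp hj).2 hjd

@[to_additive]
theorem prod_nonMultiples_sub {α : Type*} [CommMonoid α] (hM : p ∣ M) (f : ℕ → α) :
    ∏ j ∈ nonMultiples p M, f (M - j) = ∏ j ∈ nonMultiples p M, f j := by
  refine prod_nbij' (M - ·) (M - ·) (fun j hj => sub_mem_nonMultiples hM hj)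
    (fun j hj => sub_mem_nonMultiples hM hj) (fun j hj => ?_) (fun j hj => ?_) (fun j hj => rfl)
    <;> exact Nat.sub_sub_self (lt_of_mem_nonMultiples hM hj).le

theorem even_card_nonMultiples (hp : Odd p) (hM : p ∣ M) : Even #(nonMultiples p M) := by
  have hcard := card_filter_add_card_filter_not (s := Ioc 0 M) (p ∣ ·)
  rw [Ioc_filter_dvd_card_eq_div, card_Ioc] at hcard
  obtain ⟨q, rfl⟩ := hM
  rw [Nat.mul_div_cancel_left q hp.pos] at hcard
  have hq : #(nonMultiples p (p * q)) = (p - 1) * q := by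
    rw [nonMultiples, Nat.sub_one_mul]
    omega
  rw [hq]
  exact (Nat.Odd.sub_odd hp odd_one).mul_right q

theorem sum_nonMultiples_mul {A : Type*} [AddCommMonoid A] {q : ℕ} (hq : p ∣ q)
    (f : ZMod q → A) (t : ℕ) :
    ∑ j ∈ nonMultiples p (q * t), f j = t • ∑ j ∈ nonMultiples p q, f j := by
  induction t with
  | zero => simp [nonMultiples]
  | succ t ih =>
    rw [mul_add_one, sum_nonMultiples_add (hq.mul_right t), ih, succ_nsmul]
    simp

theorem sum_nonMultiples_eq_sum_units {A : Type*} [AddCommMonoid A] [Fact p.Prime]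
    {r : ℕ} (hr : r ≠ 0) (f : ZMod (p ^ r) → A) :
    ∑ j ∈ nonMultiples p (p ^ r), f j = ∑ u : (ZMod (p ^ r))ˣ, f u := by
  have hp : p.Prime := Fact.out
  symm
  refine sum_nbij (fun u => (u : ZMod (p ^ r)).val) (fun u _ => ?_) (fun u _ v _ h => ?_)
    (fun j hj => ?_) (fun u _ => by simp)
  · have hcop := (hp.coprime_pow_iff_not_dvd hr).mp (ZMod.val_coe_unit_coprime u)
    exact mem_nonMultiples.mpr
      ⟨⟨pos_of_ne_zero fun h => hcop (h ▸ dvd_zero p), (ZMod.val_lt _).le⟩, hcop⟩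
  · exact Units.ext (ZMod.val_injective _ h)
  · obtain ⟨⟨h0, hle⟩, hj⟩ := mem_nonMultiples.mp (mem_coe.mp hj)
    have hlt : j < p ^ r := lt_of_le_of_ne hle fun h => hj (h ▸ dvd_pow_self p hr)
    refine ⟨ZMod.unitOfCoprime j ((hp.coprime_pow_iff_not_dvd hr).mpr hj), mem_univ _, ?_⟩
    simp [ZMod.val_cast_of_lt hlt]

theorem sum_inv_sq_nonMultiples (hp : p.Prime) (hp5 : 5 ≤ p) {r : ℕ} (hr : r ≠ 0)
    (hM : p ^ r ∣ M) : ∑ j ∈ nonMultiples p M, ((j : ZMod (p ^ r))⁻¹) ^ 2 = 0 := by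
  have : Fact p.Prime := ⟨hp⟩
  have hunit : ∀ k : ℕ, k.Prime → k < p → IsUnit (k : ZMod (p ^ r)) := fun k hk hkp =>
    (ZMod.isUnit_iff_coprime _ _).mpr <|
      hp.coprime_pow_of_not_dvd fun h => (Nat.le_of_dvd hk.pos h).not_gt hkp
  have hinv := Equiv.sum_comp (Equiv.inv (ZMod (p ^ r))ˣ) (fun u => (u : ZMod (p ^ r)) ^ 2)
  simp only [Equiv.inv_apply] at hinv
  obtain ⟨t, rfl⟩ := hM
  rw [sum_nonMultiples_mul (dvd_pow_self p hr) (fun y => y⁻¹ ^ 2),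
    sum_nonMultiples_eq_sum_units hr (fun y => y⁻¹ ^ 2)]
  simp only [ZMod.inv_coe_unit]
  rw [hinv, sum_units_sq_eq_zero (by exact_mod_cast hunit 2 prime_two (by omega))
    (by exact_mod_cast hunit 3 prime_three (by omega)), smul_zero]

theorem two_mul_sum_prod_erase (hp : p.Prime) (hp2 : p ≠ 2) (hM : p ∣ M) :
    2 * ∑ j ∈ nonMultiples p M, ∏ k ∈ (nonMultiples p M).erase j, k
      = M * ∑ j ∈ nonMultiples p M, ∏ k ∈ ((nonMultiples p M).erase j).erase (M - j), k := by
  set T := nonMultiples p M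
  have hpair : ∀ j ∈ T, ∏ k ∈ T.erase j, k + ∏ k ∈ T.erase (M - j), k
      = M * ∏ k ∈ (T.erase j).erase (M - j), k := by
    intro j hj
    have hne := sub_ne_self_of_mem_nonMultiples hp hp2 hM hj
    rw [← mul_prod_erase (T.erase j) (fun k => k)
        (mem_erase.mpr ⟨hne, sub_mem_nonMultiples hM hj⟩),
      ← mul_prod_erase (T.erase (M - j)) (fun k => k) (mem_erase.mpr ⟨hne.symm, hj⟩),
      erase_right_comm, ← add_mul, Nat.sub_add_cancel (lt_of_mem_nonMultiples hM hj).le]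
  rw [two_mul]
  nth_rw 2 [← sum_nonMultiples_sub hM]
  rw [← sum_add_distrib, mul_sum]
  exact sum_congr rfl hpair

theorem pow_dvd_sum_prod_erase_erase (hp : p.Prime) (hp5 : 5 ≤ p) {r : ℕ} (hr : r ≠ 0)
    (hM : p ^ r ∣ M) :
    p ^ r ∣ ∑ j ∈ nonMultiples p M, ∏ k ∈ ((nonMultiples p M).erase j).erase (M - j), k := by
  set T := nonMultiples p M
  have hpM : p ∣ M := (dvd_pow_self p hr).trans hM
  have hterm : ∀ j ∈ T, ((∏ k ∈ (T.erase j).erase (M - j), k : ℕ) : ZMod (p ^ r))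
      = -((j : ZMod (p ^ r))⁻¹) ^ 2 * ((∏ k ∈ T, k : ℕ) : ZMod (p ^ r)) := by
    intro j hj
    have hne := sub_ne_self_of_mem_nonMultiples hp (by omega) hpM hj
    have hunit : (j : ZMod (p ^ r))⁻¹ * j = 1 := ZMod.inv_mul_of_unit _ <|
      (ZMod.isUnit_iff_coprime _ _).mpr (hp.coprime_pow_of_not_dvd (mem_nonMultiples.mp hj).2)
    have hMj : ((M - j : ℕ) : ZMod (p ^ r)) = -j := by
      rw [Nat.cast_sub (lt_of_mem_nonMultiples hpM hj).le,
        (ZMod.natCast_eq_zero_iff M _).mpr hM, zero_sub]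
    rw [← mul_prod_erase T (fun k => k) hj, ← mul_prod_erase (T.erase j) (fun k => k)
      (mem_erase.mpr ⟨hne, sub_mem_nonMultiples hpM hj⟩)]
    push_cast [hMj]
    linear_combination -(∏ k ∈ (T.erase j).erase (M - j), (k : ZMod (p ^ r)))
      * (1 + (j : ZMod (p ^ r))⁻¹ * j) * hunit
  rw [← ZMod.natCast_eq_zero_iff, Nat.cast_sum, sum_congr rfl hterm, ← sum_mul, sum_neg_distrib,
    sum_inv_sq_nonMultiples hp hp5 hr hM, neg_zero, zero_mul]

theorem prod_add_modEq_prod (hp : p.Prime) (hp5 : 5 ≤ p) {r : ℕ} (hr : r ≠ 0)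
    (hM : p ^ r ∣ M) :
    ∏ j ∈ nonMultiples p M, (M + j) ≡ ∏ j ∈ nonMultiples p M, j [MOD p ^ (3 * r)] := by
  set T := nonMultiples p M
  have hpM : p ∣ M := (dvd_pow_self p hr).trans hM
  set F : ℤ[X] := ∏ j ∈ T, (X + C (j : ℤ))
  have hplus : F.eval (M : ℤ) = ((∏ j ∈ T, (M + j) : ℕ) : ℤ) := by
    simp [F, eval_prod]
  have hminus : F.eval (-(M : ℤ)) = ((∏ j ∈ T, j : ℕ) : ℤ) := by
    have hrefl : ∀ j ∈ T, -(M : ℤ) + j = -((M - j : ℕ) : ℤ) := fun j hj => by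
      rw [Nat.cast_sub (lt_of_mem_nonMultiples hpM hj).le]
      ring
    have heven := even_card_nonMultiples (hp.odd_of_ne_two (by omega)) hpM
    simp only [F, eval_prod, eval_add, eval_X, eval_C]
    rw [prod_congr rfl hrefl, prod_neg, heven.neg_one_pow, one_mul,
      prod_nonMultiples_sub hpM (fun j => (j : ℤ)), Nat.cast_prod]
  have hcoeff : F.coeff 1 = ((∑ j ∈ T, ∏ k ∈ T.erase j, k : ℕ) : ℤ) := by
    rw [coeff_one_prod_X_add_C]
    push_cast
    rfl
  have hlinear : (p : ℤ) ^ (3 * r) ∣ 2 * F.coeff 1 * M := by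
    rw [hcoeff]
    suffices p ^ (3 * r) ∣ 2 * (∑ j ∈ T, ∏ k ∈ T.erase j, k) * M by exact_mod_cast this
    rw [two_mul_sum_prod_erase hp (by omega) hpM, show 3 * r = r + r + r by ring, pow_add,
      pow_add]
    exact mul_dvd_mul (mul_dvd_mul hM (pow_dvd_sum_prod_erase_erase hp hp5 hr hM)) hM
  have hcubic : (p : ℤ) ^ (3 * r) ∣ (M : ℤ) ^ 3 := by
    rw [pow_mul']
    exact pow_dvd_pow_of_dvd (Int.natCast_dvd_natCast.mpr hM) 3
  rw [Nat.modEq_iff_dvd, ← hplus, ← hminus, Nat.cast_pow, ← dvd_neg]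
  convert (hcubic.trans (F.pow_three_dvd_eval_sub_eval_neg M)).add hlinear using 1
  ring

end JacobsthalLjunggren

open JacobsthalLjunggren in
theorem jacobsthal_ljunggren (p m r : ℕ) (hp : p.Prime) (hp5 : 5 ≤ p) (hr : 1 ≤ r) :
    (2 * (m * p ^ r)).choose (m * p ^ r)
      ≡ (2 * (m * p ^ (r - 1))).choose (m * p ^ (r - 1)) [MOD p ^ (3 * r)] := by
  set n := m * p ^ (r - 1)
  have hnp : n * p = m * p ^ r := by rw [mul_assoc, ← pow_succ, Nat.sub_add_cancel hr]
  have hdvd : p ^ r ∣ n * p := hnp ▸ dvd_mul_left _ _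
  rw [← hnp]
  set F := ∏ j ∈ nonMultiples p (n * p), j
  have hdouble : ∏ j ∈ nonMultiples p (2 * (n * p)), j ≡ F ^ 2 [MOD p ^ (3 * r)] := by
    rw [two_mul, prod_nonMultiples_add ((dvd_pow_self p (by omega)).trans hdvd), sq]
    exact (prod_add_modEq_prod hp hp5 (by omega) hdvd).mul_left F
  have hcop : (p ^ (3 * r)).gcd (F ^ 2) = 1 :=
    Nat.Coprime.pow _ _ <| Nat.Coprime.prod_right fun j hj =>
      hp.coprime_iff_not_dvd.mpr (mem_nonMultiples.mp hj).2
  refine Nat.ModEq.cancel_right_of_coprime hcop ?_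
  calc (2 * (n * p)).choose (n * p) * F ^ 2
      = (2 * n).choose n * ∏ j ∈ nonMultiples p (2 * (n * p)), j := choose_mul_prod_sq hp.pos n
    _ ≡ (2 * n).choose n * F ^ 2 [MOD p ^ (3 * r)] := hdouble.mul_left _
end

section
/- For every prime p and every nonnegative integer n with base-p expansion n = n_0 + n_1 p + ··· + n_r p^r (0 ≤ n_i < p), the central binomial coefficients satisfy the Lucas congruence C(2n, n) ≡ C(2n_0, n_0) · C(2n_1, n_1) ··· C(2n_r, n_r) (mod p). -/
/-!
One step of Lucas' theorem splits off the last base-`p` digit `r` of `n`: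
`C(2n, n) ≡ C(2n mod p, r) · C(⌊2n/p⌋, ⌊n/p⌋)`. If `2r < p` there is no carry and this is
`C(2r, r) · C(2⌊n/p⌋, ⌊n/p⌋)`. If `2r ≥ p` the carry makes `2n mod p = 2r - p < r`, so the
left side vanishes mod `p`, and so does the right side because `p ∣ C(2r, r)`. Induction on the
number of digits finishes the proof.
-/

namespace Nat

variable {p : ℕ} [Fact p.Prime]

theorem choose_two_mul_add_mul_modEq_of_two_mul_lt {r q : ℕ} (hr : 2 * r < p) :
    (2 * (r + p * q)).choose (r + p * q) ≡ (2 * r).choose r * (2 * q).choose q [MOD p] := by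
  have hp : 0 < p := (Fact.out : p.Prime).pos
  rw [show 2 * (r + p * q) = 2 * r + p * (2 * q) by ring]
  refine Choose.choose_modEq_choose_mod_mul_choose_div_nat.trans ?_
  rw [add_mul_mod_self_left, add_mul_mod_self_left, add_mul_div_left _ _ hp,
    add_mul_div_left _ _ hp, mod_eq_of_lt hr, mod_eq_of_lt (by omega), div_eq_of_lt hr,
    div_eq_of_lt (by omega), zero_add, zero_add]

theorem choose_two_mul_add_mul_modEq_zero_of_le_two_mul {r q : ℕ} (hr : r < p)
    (hcarry : p ≤ 2 * r) : (2 * (r + p * q)).choose (r + p * q) ≡ 0 [MOD p] := by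
  rw [show 2 * (r + p * q) = (2 * r - p) + p * (2 * q + 1) by grind]
  refine Choose.choose_modEq_choose_mod_mul_choose_div_nat.trans ?_
  rw [add_mul_mod_self_left, add_mul_mod_self_left, mod_eq_of_lt (by omega), mod_eq_of_lt hr,
    choose_eq_zero_of_lt (by omega), zero_mul]

theorem choose_two_mul_add_mul_modEq {r q : ℕ} (hr : r < p) :
    (2 * (r + p * q)).choose (r + p * q) ≡ (2 * r).choose r * (2 * q).choose q [MOD p] := by
  rcases lt_or_ge (2 * r) p with hno_carry | hcarry
  · exact choose_two_mul_add_mul_modEq_of_two_mul_lt hno_carry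
  · have hdvd : p ∣ (2 * r).choose r := by
      simpa [two_mul] using (Fact.out : p.Prime).dvd_choose_add hr hr (by omega)
    calc (2 * (r + p * q)).choose (r + p * q) ≡ 0 [MOD p] :=
          choose_two_mul_add_mul_modEq_zero_of_le_two_mul hr hcarry
      _ ≡ (2 * r).choose r * (2 * q).choose q [MOD p] :=
          (modEq_zero_iff_dvd.mpr (dvd_mul_of_dvd_left hdvd _)).symm

end Nat

theorem lucas_congruence_central_binomial (p n : ℕ) (hp : p.Prime) :
    (2 * n).choose n ≡ ((Nat.digits p n).map fun d => (2 * d).choose d).prod [MOD p] := by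
  have : Fact p.Prime := ⟨hp⟩
  induction n using Nat.strong_induction_on with
  | _ n ih =>
    rcases Nat.eq_zero_or_pos n with rfl | hn
    · simp [Nat.ModEq.refl]
    rw [Nat.digits_def' hp.one_lt hn, List.map_cons, List.prod_cons]
    calc (2 * n).choose n = (2 * (n % p + p * (n / p))).choose (n % p + p * (n / p)) := by
          rw [Nat.mod_add_div]
      _ ≡ (2 * (n % p)).choose (n % p) * (2 * (n / p)).choose (n / p) [MOD p] :=
          Nat.choose_two_mul_add_mul_modEq (Nat.mod_lt n hp.pos)
      _ ≡ _ [MOD p] := (ih _ (Nat.div_lt_self hn hp.one_lt)).mul_left _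
end

section
/- For every prime p and every nonnegative integer n with base-p expansion n = n_0 + n_1 p + ··· + n_r p^r, the Apéry-like sequence A(n) = ∑_{k=0}^{n} C(n,k)^2 · C(n+k,k) (the Apéry numbers associated to ζ(2)) satisfies A(n) ≡ A(n_0) · A(n_1) ··· A(n_r) (mod p). -/
/-- The Apéry numbers associated to ζ(2): `A(n) = ∑_{k=0}^{n} C(n,k)^2 · C(n+k,k)`. -/
def aperyZeta2 (n : ℕ) : ℕ :=
  ∑ k ∈ Finset.range (n + 1), n.choose k ^ 2 * (n + k).choose k

/-!
Vandermonde's identity `C(n+k,k) = ∑ⱼ C(n,k-j) C(k,j)` turns `A(n)` into a double sum of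
products `C(n,k)² C(n,k-j) C(k,j)`. By Lucas's theorem such a product at
`(a + p m, k₀ + p k₁, j₀ + p j₁)`, with digits `a, k₀, j₀ < p`, is congruent mod `p` to the product
at `(a, k₀, j₀)` times the product at `(m, k₁, j₁)`. When `j₀ > k₀` or `j₁ > k₁` the digits of
`k - j` are not `k₀ - j₀, k₁ - j₁`, but then both sides contain the vanishing factor `C(k₀, j₀)` or
`C(k₁, j₁)`. Summing over a box of indices gives `A(a + p m) ≡ A(a) A(m)`, and iterating over the
base-`p` digits of `n` gives the theorem.
-/

open Finset

theorem Finset.sum_range_mul_eq_sum_sum {M : Type*} [AddCommMonoid M] (p N : ℕ) (f : ℕ → M) :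
    ∑ k ∈ range (p * N), f k = ∑ k₁ ∈ range N, ∑ k₀ ∈ range p, f (k₀ + p * k₁) := by
  induction N with
  | zero => simp
  | succ N ih =>
    rw [Nat.mul_succ, sum_range_add, ih, sum_range_succ]
    simp only [Nat.add_comm (p * N)]

theorem Finset.sum_range_mul_eq_mul_sum {R : Type*} [CommSemiring R] {p N : ℕ} {g u v : ℕ → R}
    (h : ∀ k₀ < p, ∀ k₁ < N, g (k₀ + p * k₁) = u k₀ * v k₁) :
    ∑ k ∈ range (p * N), g k = (∑ k ∈ range p, u k) * ∑ k ∈ range N, v k := by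
  rw [sum_range_mul_eq_sum_sum, sum_comm, sum_mul_sum]
  refine sum_congr rfl fun k₀ hk₀ => sum_congr rfl fun k₁ hk₁ => ?_
  exact h k₀ (mem_range.1 hk₀) k₁ (mem_range.1 hk₁)

theorem Finset.sum_range_succ_eq_of_eq_zero {M : Type*} [AddCommMonoid M] {f : ℕ → M} {n N : ℕ}
    (hN : n < N) (hf : ∀ k, n < k → f k = 0) :
    ∑ k ∈ range (n + 1), f k = ∑ k ∈ range N, f k :=
  sum_subset (range_subset_range.2 hN) fun k _ hk => hf k (by simpa using hk)

theorem Nat.prod_map_digits_eq {M : Type*} [CommMonoid M] {b : ℕ} (hb : 1 < b) {f : ℕ → M}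
    (h₀ : f 0 = 1) (hf : ∀ a < b, ∀ m, f (a + b * m) = f a * f m) (n : ℕ) :
    ((Nat.digits b n).map f).prod = f n := by
  induction n using Nat.strong_induction_on with
  | _ n ih =>
    rcases Nat.eq_zero_or_pos n with rfl | hn
    · simp [h₀]
    · rw [Nat.digits_def' hb hn, List.map_cons, List.prod_cons, ih _ (Nat.div_lt_self hn hb),
        ← hf _ (Nat.mod_lt n (by omega)), Nat.mod_add_div]

section Lucas

variable {p : ℕ} [Fact p.Prime]

theorem ZMod.natCast_choose_add_mul {x₀ y₀ : ℕ} (hx : x₀ < p) (hy : y₀ < p) (x₁ y₁ : ℕ) :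
    ((x₀ + p * x₁).choose (y₀ + p * y₁) : ZMod p) = x₀.choose y₀ * x₁.choose y₁ := by
  have hp : 0 < p := (Fact.out (p := p.Prime)).pos
  have := (ZMod.natCast_eq_natCast_iff _ _ _).2
    (Choose.choose_modEq_choose_mod_mul_choose_div_nat (p := p) (n := x₀ + p * x₁)
      (k := y₀ + p * y₁))
  simpa [Nat.add_mul_mod_self_left, Nat.mod_eq_of_lt, Nat.add_mul_div_left, Nat.div_eq_of_lt,
    hx, hy, hp] using this

theorem ZMod.natCast_choose_sub_mul_choose_add_mul {x₀ k₀ j₀ : ℕ} (hx : x₀ < p) (hk : k₀ < p)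
    (hj : j₀ < p) (x₁ k₁ j₁ : ℕ) :
    ((x₀ + p * x₁).choose (k₀ + p * k₁ - (j₀ + p * j₁)) * (k₀ + p * k₁).choose (j₀ + p * j₁)
      : ZMod p) =
      (x₀.choose (k₀ - j₀) * k₀.choose j₀) * (x₁.choose (k₁ - j₁) * k₁.choose j₁) := by
  rw [ZMod.natCast_choose_add_mul hk hj]
  by_cases hle : j₀ ≤ k₀ ∧ j₁ ≤ k₁
  · have : p * j₁ ≤ p * k₁ := Nat.mul_le_mul_left _ hle.2
    have hsub : k₀ + p * k₁ - (j₀ + p * j₁) = (k₀ - j₀) + p * (k₁ - j₁) := by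
      rw [Nat.mul_sub]; omega
    rw [hsub, ZMod.natCast_choose_add_mul hx (by omega)]
    ring
  · rcases Nat.lt_or_ge k₀ j₀ with h | h
    · simp [Nat.choose_eq_zero_of_lt h]
    · simp [Nat.choose_eq_zero_of_lt (show k₁ < j₁ by omega)]

end Lucas

theorem Nat.add_choose_eq_sum_range_choose_sub_mul_choose (n k : ℕ) :
    (n + k).choose k = ∑ j ∈ range (k + 1), n.choose (k - j) * k.choose j := by
  rw [Nat.add_choose_eq, ← Nat.sum_antidiagonal_swap]
  exact Nat.sum_antidiagonal_eq_sum_range_succ (fun j i => n.choose i * k.choose j) k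

def aperyTerm (n k j : ℕ) : ℕ := n.choose k ^ 2 * (n.choose (k - j) * k.choose j)

theorem cast_aperyTerm_add_mul {p : ℕ} [Fact p.Prime] {a k₀ j₀ : ℕ} (ha : a < p) (hk : k₀ < p)
    (hj : j₀ < p) (m k₁ j₁ : ℕ) :
    (aperyTerm (a + p * m) (k₀ + p * k₁) (j₀ + p * j₁) : ZMod p) =
      aperyTerm a k₀ j₀ * aperyTerm m k₁ j₁ := by
  simp only [aperyTerm]
  push_cast
  rw [ZMod.natCast_choose_add_mul ha hk, ZMod.natCast_choose_sub_mul_choose_add_mul ha hk hj]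
  ring

theorem aperyZeta2_eq_sum_sum_aperyTerm {n N : ℕ} (hN : n < N) :
    aperyZeta2 n = ∑ k ∈ range N, ∑ j ∈ range N, aperyTerm n k j :=
  calc aperyZeta2 n = ∑ k ∈ range (n + 1), ∑ j ∈ range (k + 1), aperyTerm n k j :=
        sum_congr rfl fun k _ => by
          rw [Nat.add_choose_eq_sum_range_choose_sub_mul_choose, mul_sum]; rfl
    _ = ∑ k ∈ range (n + 1), ∑ j ∈ range N, aperyTerm n k j :=
        sum_congr rfl fun k hk => sum_range_succ_eq_of_eq_zero (by simp at hk; omega)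
          fun j hj => by simp [aperyTerm, Nat.choose_eq_zero_of_lt hj]
    _ = ∑ k ∈ range N, ∑ j ∈ range N, aperyTerm n k j :=
        sum_range_succ_eq_of_eq_zero hN fun k hk =>
          sum_eq_zero fun j _ => by simp [aperyTerm, Nat.choose_eq_zero_of_lt hk]

theorem cast_aperyZeta2_add_mul {p : ℕ} [Fact p.Prime] {a : ℕ} (ha : a < p) (m : ℕ) :
    (aperyZeta2 (a + p * m) : ZMod p) = aperyZeta2 a * aperyZeta2 m := by
  rw [aperyZeta2_eq_sum_sum_aperyTerm (N := p * (m + 1)) (by nlinarith),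
    aperyZeta2_eq_sum_sum_aperyTerm ha, aperyZeta2_eq_sum_sum_aperyTerm (Nat.lt_succ_self m)]
  push_cast
  exact sum_range_mul_eq_mul_sum fun k₀ hk₀ k₁ _ =>
    sum_range_mul_eq_mul_sum fun j₀ hj₀ j₁ _ => cast_aperyTerm_add_mul ha hk₀ hj₀ m k₁ j₁

theorem lucas_congruence_apery (p n : ℕ) (hp : p.Prime) :
    aperyZeta2 n ≡ ((Nat.digits p n).map aperyZeta2).prod [MOD p] := by
  have := Fact.mk hp
  rw [← ZMod.natCast_eq_natCast_iff, Nat.cast_list_prod, List.map_map]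
  exact (Nat.prod_map_digits_eq hp.one_lt (f := fun n => (aperyZeta2 n : ZMod p))
    (by simp [aperyZeta2]) (fun a ha m => cast_aperyZeta2_add_mul ha m) n).symm
end

section
/- If λ is any integer and (c_n)_{n≥0} is defined by c_0 = 1 and the self-replication recursion c_n = ∑_{k=0}^{⌊n/2⌋} C(n+k+1, 3k+1)(−λ)^{n−2k} c_k − ∑_{k=0}^{n−1} C(n+2k+1, 3k+1)(−λ)^{n−k} c_k (the case μ = λ), then c_n = 0 for all n ≥ 1. -/
/-! By strong induction: once `c k = 0` for `0 < k < n`, both sums of the recursion collapse to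
their `k = 0` term, which is `(n + 1) (-λ)^n c 0` in each, so they cancel. -/

open Finset

lemma sum_range_mul_eq_zeroth_of_eq_zero {R : Type*} [NonUnitalNonAssocSemiring R] {m : ℕ}
    (hm : 0 < m) (f c : ℕ → R) (hc : ∀ k, 0 < k → k < m → c k = 0) :
    ∑ k ∈ range m, f k * c k = f 0 * c 0 := by
  obtain ⟨m, rfl⟩ := Nat.exists_eq_add_of_lt hm
  rw [zero_add, sum_range_succ', sum_eq_zero fun k hk => ?_, zero_add]
  rw [hc (k + 1) k.succ_pos (by simpa using hk), mul_zero]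

theorem self_replication_mu_eq_lambda_general (lam : ℤ) (c : ℕ → ℤ)
    (hrec : ∀ n : ℕ, 1 ≤ n → c n =
      ∑ k ∈ Finset.range (n / 2 + 1),
        ((n + k + 1).choose (3 * k + 1) : ℤ) * (-lam) ^ (n - 2 * k) * c k
      - ∑ k ∈ Finset.range n,
        ((n + 2 * k + 1).choose (3 * k + 1) : ℤ) * (-lam) ^ (n - k) * c k) :
    ∀ n : ℕ, 1 ≤ n → c n = 0 := by
  intro n
  induction n using Nat.strong_induction_on with
  | _ n ih =>
    intro hn
    have hc : ∀ k, 0 < k → k < n → c k = 0 := fun k hk hkn => ih k hkn hk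
    rw [hrec n hn,
      sum_range_mul_eq_zeroth_of_eq_zero (Nat.succ_pos _) _ _ fun k hk hkm => hc k hk (by omega),
      sum_range_mul_eq_zeroth_of_eq_zero hn _ _ hc]
    simp

theorem self_replication_mu_eq_lambda (lam : ℤ) (c : ℕ → ℤ) (h0 : c 0 = 1)
    (hrec : ∀ n : ℕ, 1 ≤ n → c n =
      ∑ k ∈ Finset.range (n / 2 + 1),
        ((n + k + 1).choose (3 * k + 1) : ℤ) * (-lam) ^ (n - 2 * k) * c k
      - ∑ k ∈ Finset.range n,
        ((n + 2 * k + 1).choose (3 * k + 1) : ℤ) * (-lam) ^ (n - k) * c k) :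
    ∀ n : ℕ, 1 ≤ n → c n = 0 :=
  self_replication_mu_eq_lambda_general lam c hrec
end
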